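/- arXiv:0803.4252 — 2 statements merged into one kernel-verified Lean document; each statement's English description precedes it below -/
import Mathlib

section
/- Let (X, d) be a compact metric space and n ≥ 1. Then the barycenter map ζ_X : I(I(X)) → I(X), defined by ζ_X(M)(φ) = M(φ̄) where φ̄ ∈ C(I(X)) is given by φ̄(μ) = μ(φ), is nonexpanding from (I(I(X)), (d̃_n)~_n) to (I(X), d̃_n): for all M, N ∈ I(I(X)), d̃_n(ζ_X(M), ζ_X(N)) ≤ (d̃_n)~_n(M, N). In particular, for every φ ∈ n-LIP(X, d), the function φ̄ : I(X) → ℝ is continuous and n-Lipschitz with respect to the pseudometric d̃_n, and (1/n)·|ζ_X(M)(φ) − ζ_X(N)(φ)| ≤ (d̃_n)~_n(M, N). -/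
/-- An idempotent (Maslov) probability measure on a topological space `X` is a functional
`μ : C(X, ℝ) → ℝ` that is normalized on constants, shifts under addition of constants, and
turns pointwise maxima into maxima. -/
def IsIdemMeasure {X : Type*} [TopologicalSpace X] (μ : C(X, ℝ) → ℝ) : Prop :=
  (∀ c : ℝ, μ (ContinuousMap.const X c) = c) ∧
  (∀ (c : ℝ) (φ : C(X, ℝ)), μ (ContinuousMap.const X c + φ) = c + μ φ) ∧
  (∀ φ ψ : C(X, ℝ), μ (φ ⊔ ψ) = max (μ φ) (μ ψ))

/-- The space `I(X)` of idempotent probability measures on `X`; as a subtype of the product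
`(C(X, ℝ) → ℝ)` it automatically carries the weak* (pointwise convergence) topology. -/
abbrev IdemMeasure (X : Type*) [TopologicalSpace X] :=
  {μ : C(X, ℝ) → ℝ // IsIdemMeasure μ}

/-- `n-LIP(X, d)`: the continuous functions that are Lipschitz with constant `n`. -/
def nLip (X : Type*) [MetricSpace X] (n : ℕ) : Set C(X, ℝ) :=
  {φ | ∀ x y : X, |φ x - φ y| ≤ (n : ℝ) * dist x y}

/-- The pseudometric `d̂ₙ(μ, ν) = sup { |μ(φ) − ν(φ)| : φ ∈ n-LIP(X, d) }`. -/
noncomputable def dHat {X : Type*} [MetricSpace X] (n : ℕ) (μ ν : C(X, ℝ) → ℝ) : ℝ :=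
  sSup {r : ℝ | ∃ φ ∈ nLip X n, r = |μ φ - ν φ|}

/-- `d̃ₙ = (1/n)·d̂ₙ`. -/
noncomputable def dTilde {X : Type*} [MetricSpace X] (n : ℕ) (μ ν : C(X, ℝ) → ℝ) : ℝ :=
  (1 / (n : ℝ)) * dHat n μ ν

/-- The functions on a space `Y` that are `n`-Lipschitz with respect to a (pseudo)metric
`ρ : Y → Y → ℝ`. -/
def nLipPseudo {Y : Type*} [TopologicalSpace Y] (n : ℕ) (ρ : Y → Y → ℝ) : Set C(Y, ℝ) :=
  {ψ | ∀ a b : Y, |ψ a - ψ b| ≤ (n : ℝ) * ρ a b}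

/-- The construction `d̂ₙ` applied to an arbitrary (pseudo)metric `ρ` on a space `Y`. -/
noncomputable def dHatPseudo {Y : Type*} [TopologicalSpace Y] (n : ℕ) (ρ : Y → Y → ℝ)
    (M N : C(Y, ℝ) → ℝ) : ℝ :=
  sSup {r : ℝ | ∃ ψ ∈ nLipPseudo n ρ, r = |M ψ - N ψ|}

/-- The construction `d̃ₙ = (1/n)·d̂ₙ` applied to an arbitrary (pseudo)metric `ρ`. -/
noncomputable def dTildePseudo {Y : Type*} [TopologicalSpace Y] (n : ℕ) (ρ : Y → Y → ℝ)
    (M N : C(Y, ℝ) → ℝ) : ℝ :=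
  (1 / (n : ℝ)) * dHatPseudo n ρ M N

/-- For `φ ∈ C(X, ℝ)`, the function `φ̄ : I(X) → ℝ`, `φ̄(μ) = μ(φ)`, is continuous in the
weak* topology. -/
noncomputable def barFn {X : Type*} [TopologicalSpace X] (φ : C(X, ℝ)) :
    C(IdemMeasure X, ℝ) :=
  ⟨fun μ => μ.val φ, (continuous_apply φ).comp continuous_subtype_val⟩

lemma idem_mono {Y : Type*} [TopologicalSpace Y] {μ : C(Y, ℝ) → ℝ} (h : IsIdemMeasure μ)
    {φ ψ : C(Y, ℝ)} (hle : φ ≤ ψ) : μ φ ≤ μ ψ := by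
  have e : φ ⊔ ψ = ψ := sup_eq_right.mpr hle
  have := h.2.2 φ ψ
  rw [e] at this
  rw [this]; exact le_max_left _ _

lemma idem_bound {Y : Type*} [TopologicalSpace Y] {μ : C(Y, ℝ) → ℝ} (h : IsIdemMeasure μ)
    (φ : C(Y, ℝ)) (y₀ : Y) (B : ℝ) (hB : ∀ y, |φ y - φ y₀| ≤ B) : |μ φ - φ y₀| ≤ B := by
  have h1 : φ ≤ ContinuousMap.const Y (φ y₀ + B) := fun y => by
    have := (abs_le.mp (hB y)).2; simpa using by linarith
  have h2 : ContinuousMap.const Y (φ y₀ - B) ≤ φ := fun y => by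
    have := (abs_le.mp (hB y)).1; simpa using by linarith
  have u := idem_mono h h1
  have l := idem_mono h h2
  rw [h.1] at u l
  rw [abs_le]; constructor <;> linarith

lemma idem_nonempty {Y : Type*} [TopologicalSpace Y] {μ : C(Y, ℝ) → ℝ}
    (h : IsIdemMeasure μ) : Nonempty Y := by
  by_contra hne
  haveI : IsEmpty Y := not_nonempty_iff.mp hne
  have e : ContinuousMap.const Y (0:ℝ) = ContinuousMap.const Y 1 := by
    ext y; exact (IsEmpty.false y).elim
  have h0 := h.1 0
  have h1 := h.1 1
  rw [e] at h0; rw [h1] at h0; norm_num at h0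

/-- The barycenter map `ζ_X : I(I(X)) → I(X)`, `ζ_X(M)(φ) = M(φ̄)`, is
nonexpanding from `(I(I(X)), (d̃ₙ)~ₙ)` to `(I(X), d̃ₙ)`; in particular, for `φ ∈ n-LIP(X, d)`
the (continuous) function `φ̄` is `n`-Lipschitz for `d̃ₙ`, and
`(1/n)·|ζ_X(M)(φ) − ζ_X(N)(φ)| ≤ (d̃ₙ)~ₙ(M, N)`. -/
theorem statement5 {X : Type*} [MetricSpace X] [CompactSpace X] (n : ℕ) (hn : 1 ≤ n)
    (M N : IdemMeasure (IdemMeasure X)) :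
    dTilde n (fun φ : C(X, ℝ) => M.val (barFn φ)) (fun φ : C(X, ℝ) => N.val (barFn φ)) ≤
      dTildePseudo n (fun μ ν : IdemMeasure X => dTilde n μ.val ν.val) M.val N.val ∧
    (∀ φ ∈ nLip X n,
      barFn φ ∈ nLipPseudo n (fun μ ν : IdemMeasure X => dTilde n μ.val ν.val)) ∧
    (∀ φ ∈ nLip X n,
      (1 / (n : ℝ)) * |M.val (barFn φ) - N.val (barFn φ)| ≤
        dTildePseudo n (fun μ ν : IdemMeasure X => dTilde n μ.val ν.val) M.val N.val) := by
  obtain ⟨μ₀⟩ := idem_nonempty M.2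
  obtain ⟨x₀⟩ := idem_nonempty μ₀.2
  have hnpos : (0:ℝ) < (n:ℝ) := by exact_mod_cast lt_of_lt_of_le zero_lt_one hn
  have hinv : (n:ℝ) * ((1/(n:ℝ))) = 1 := by field_simp
  set D := Metric.diam (Set.univ : Set X) with hD
  have hdist : ∀ x : X, dist x x₀ ≤ D := fun x =>
    Metric.dist_le_diam_of_mem isCompact_univ.isBounded (Set.mem_univ x) (Set.mem_univ x₀)
  have key : ∀ (μ : IdemMeasure X), ∀ φ ∈ nLip X n, |μ.val φ - φ x₀| ≤ (n:ℝ) * D := by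
    intro μ φ hφ
    exact idem_bound μ.2 φ x₀ _ (fun x =>
      (hφ x x₀).trans (mul_le_mul_of_nonneg_left (hdist x) (Nat.cast_nonneg n)))
  have zeroLip : (0 : C(X, ℝ)) ∈ nLip X n := by
    intro x y
    simp [mul_nonneg (Nat.cast_nonneg n) dist_nonneg]
  -- boundedness of the sets defining dHat on I(X)
  have hSbdd : ∀ μ ν : IdemMeasure X,
      BddAbove {r : ℝ | ∃ φ ∈ nLip X n, r = |μ.val φ - ν.val φ|} := by
    intro μ ν
    refine ⟨2 * ((n:ℝ) * D), ?_⟩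
    rintro r ⟨φ, hφ, rfl⟩
    have h1 := key μ φ hφ
    have h2 := key ν φ hφ
    calc |μ.val φ - ν.val φ| ≤ |μ.val φ - φ x₀| + |ν.val φ - φ x₀| := by
          rw [abs_sub_comm (ν.val φ) (φ x₀)]; exact abs_sub_le _ _ _
      _ ≤ 2 * ((n:ℝ) * D) := by linarith
  have hSne : ∀ μ ν : IdemMeasure X,
      Set.Nonempty {r : ℝ | ∃ φ ∈ nLip X n, r = |μ.val φ - ν.val φ|} :=
    fun μ ν => ⟨_, 0, zeroLip, rfl⟩
  have hdHat_le : ∀ μ ν : IdemMeasure X, dHat n μ.val ν.val ≤ 2 * ((n:ℝ) * D) := by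
    intro μ ν
    refine csSup_le (hSne μ ν) ?_
    rintro r ⟨φ, hφ, rfl⟩
    have h1 := key μ φ hφ
    have h2 := key ν φ hφ
    calc |μ.val φ - ν.val φ| ≤ |μ.val φ - φ x₀| + |ν.val φ - φ x₀| := by
          rw [abs_sub_comm (ν.val φ) (φ x₀)]; exact abs_sub_le _ _ _
      _ ≤ 2 * ((n:ℝ) * D) := by linarith
  -- Part 2
  have part2 : ∀ φ ∈ nLip X n,
      barFn φ ∈ nLipPseudo n (fun μ ν : IdemMeasure X => dTilde n μ.val ν.val) := by
    intro φ hφ μ ν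
    show |μ.val φ - ν.val φ| ≤ (n:ℝ) * ((1/(n:ℝ)) * dHat n μ.val ν.val)
    rw [← mul_assoc, hinv, one_mul]
    exact le_csSup (hSbdd μ ν) ⟨φ, hφ, rfl⟩
  -- boundedness of the set defining dHatPseudo
  have hTbdd : BddAbove {r : ℝ | ∃ ψ ∈ nLipPseudo n
      (fun μ ν : IdemMeasure X => dTilde n μ.val ν.val), r = |M.val ψ - N.val ψ|} := by
    refine ⟨2 * (2 * ((n:ℝ) * D)), ?_⟩
    rintro r ⟨ψ, hψ, rfl⟩
    have hψb : ∀ μ : IdemMeasure X, |ψ μ - ψ μ₀| ≤ 2 * ((n:ℝ) * D) := by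
      intro μ
      have := hψ μ μ₀
      have h2 : (n:ℝ) * dTilde n μ.val μ₀.val ≤ 2 * ((n:ℝ) * D) := by
        have : (n:ℝ) * dTilde n μ.val μ₀.val = dHat n μ.val μ₀.val := by
          rw [dTilde, ← mul_assoc, hinv, one_mul]
        rw [this]; exact hdHat_le μ μ₀
      linarith
    have h1 := idem_bound M.2 ψ μ₀ _ hψb
    have h2 := idem_bound N.2 ψ μ₀ _ hψb
    calc |M.val ψ - N.val ψ| ≤ |M.val ψ - ψ μ₀| + |N.val ψ - ψ μ₀| := by
          rw [abs_sub_comm (N.val ψ) (ψ μ₀)]; exact abs_sub_le _ _ _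
      _ ≤ 2 * (2 * ((n:ℝ) * D)) := by linarith
  -- Part 3
  have part3 : ∀ φ ∈ nLip X n,
      (1 / (n : ℝ)) * |M.val (barFn φ) - N.val (barFn φ)| ≤
        dTildePseudo n (fun μ ν : IdemMeasure X => dTilde n μ.val ν.val) M.val N.val := by
    intro φ hφ
    refine mul_le_mul_of_nonneg_left ?_ (by positivity)
    exact le_csSup hTbdd ⟨barFn φ, part2 φ hφ, rfl⟩
  refine ⟨?_, part2, part3⟩
  -- Part 1
  refine mul_le_mul_of_nonneg_left ?_ (by positivity)
  refine csSup_le ⟨_, 0, zeroLip, rfl⟩ ?_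
  rintro r ⟨φ, hφ, rfl⟩
  exact le_csSup hTbdd ⟨barFn φ, part2 φ hφ, rfl⟩
end

section
/- Let (X, d) be a compact metric space. Then the function d̃(μ, ν) = Σ_{n=1}^∞ 2^{−n}·d̃_n(μ, ν) is well defined (the series converges) and is a metric on I(X): it is symmetric, satisfies the triangle inequality, and d̃(μ, ν) = 0 if and only if μ = ν. -/
/-- `d̃(μ, ν) = Σ_{n=1}^∞ 2^{−n}·d̃ₙ(μ, ν)`. -/
noncomputable def dMet {X : Type*} [MetricSpace X] (μ ν : C(X, ℝ) → ℝ) : ℝ :=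
  ∑' k : ℕ, (1 / 2 ^ (k + 1) : ℝ) * dTilde (k + 1) μ ν

/-!
An idempotent probability measure is monotone and commutes with adding constants, hence
`|μ φ - μ ψ| ≤ sup |φ - ψ|`. An `n`-Lipschitz `φ` lies within `n · diam X` of the constant
`φ x₀`, so `d̃ₙ ≤ 2 diam X` and the series converges; symmetry and the triangle inequality hold
termwise. If `d̃(μ, ν) = 0`, then `μ` and `ν` agree on all Lipschitz functions, and these are
uniformly dense in `C(X)`: for `n` large, `x ↦ inf_y (φ y + n d(x, y))` is `n`-Lipschitz and
uniformly close to `φ`.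
-/

open Metric Set

section LipschitzEnvelope

variable {X : Type*} [PseudoMetricSpace X]

/-- The largest `K`-Lipschitz minorant of `f`. -/
noncomputable def lipschitzEnvelope (f : X → ℝ) (K : ℝ) (x : X) : ℝ :=
  ⨅ y, f y + K * dist x y

variable {f : X → ℝ} {K : ℝ}

lemma bddBelow_range_add_mul_dist (hf : BddBelow (range f)) (hK : 0 ≤ K) (x : X) :
    BddBelow (range fun y => f y + K * dist x y) := by
  obtain ⟨m, hm⟩ := hf
  refine ⟨m, ?_⟩
  rintro _ ⟨y, rfl⟩
  have := hm (mem_range_self y)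
  dsimp only
  nlinarith [dist_nonneg (x := x) (y := y)]

lemma lipschitzEnvelope_le (hf : BddBelow (range f)) (hK : 0 ≤ K) (x : X) :
    lipschitzEnvelope f K x ≤ f x := by
  simpa [lipschitzEnvelope] using ciInf_le (bddBelow_range_add_mul_dist hf hK x) x

lemma lipschitzEnvelope_le_add_mul (hf : BddBelow (range f)) (hK : 0 ≤ K) (x x' : X) :
    lipschitzEnvelope f K x ≤ lipschitzEnvelope f K x' + K * dist x x' := by
  have : Nonempty X := ⟨x⟩
  rw [← sub_le_iff_le_add]
  refine le_ciInf fun y => ?_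
  have hx := ciInf_le (bddBelow_range_add_mul_dist hf hK x) y
  have htri : K * dist x y ≤ K * dist x x' + K * dist x' y := by
    rw [← mul_add]
    exact mul_le_mul_of_nonneg_left (dist_triangle x x' y) hK
  simp only [lipschitzEnvelope] at hx ⊢
  linarith

lemma lipschitzWith_lipschitzEnvelope (hf : BddBelow (range f)) (K : NNReal) :
    LipschitzWith K (lipschitzEnvelope f K) :=
  LipschitzWith.of_le_add_mul K (lipschitzEnvelope_le_add_mul hf K.coe_nonneg)

/-- Points closer than `δ` cost at most `ε`; farther points are excluded by the penalty
`K δ`, once `K δ` exceeds the oscillation of `f`. -/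
lemma sub_le_lipschitzEnvelope {x : X} {ε δ : ℝ} (hK : 0 ≤ K) (hε : 0 ≤ ε)
    (hnear : ∀ y, dist x y < δ → f x - ε ≤ f y) (hfar : ∀ y, f x ≤ f y + K * δ) :
    f x - ε ≤ lipschitzEnvelope f K x := by
  have : Nonempty X := ⟨x⟩
  refine le_ciInf fun y => ?_
  rcases lt_or_ge (dist x y) δ with hxy | hxy
  · nlinarith [hnear y hxy, dist_nonneg (x := x) (y := y)]
  · nlinarith [hfar y]

theorem ContinuousMap.exists_lipschitzWith_abs_sub_le [CompactSpace X] (φ : C(X, ℝ)) {ε : ℝ}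
    (hε : 0 < ε) : ∃ n : ℕ, ∃ ψ : C(X, ℝ), LipschitzWith n ψ ∧ ∀ x, |φ x - ψ x| ≤ ε := by
  obtain ⟨δ, hδ, hφδ⟩ :=
    uniformContinuous_iff.mp (CompactSpace.uniformContinuous_of_continuous φ.continuous) ε hε
  have hbdd : BddBelow (range φ) := (isCompact_range φ.continuous).bddBelow
  obtain ⟨n, hn⟩ := exists_nat_ge (2 * ‖φ‖ / δ)
  have hosc : ∀ x y, φ x ≤ φ y + n * δ := fun x y => by
    have hx := (abs_le.mp (φ.norm_coe_le_norm x)).2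
    have hy := (abs_le.mp (φ.norm_coe_le_norm y)).1
    have := (div_le_iff₀ hδ).mp hn
    linarith
  have hψ := lipschitzWith_lipschitzEnvelope hbdd n
  have hle x := lipschitzEnvelope_le hbdd (n : NNReal).coe_nonneg x
  have hge x := sub_le_lipschitzEnvelope (f := φ) (x := x) (δ := δ) (n : NNReal).coe_nonneg hε.le
    (fun y hy => by have := hφδ hy; rw [Real.dist_eq, abs_lt] at this; linarith)
    (by simpa using hosc x)
  refine ⟨n, ⟨_, hψ.continuous⟩, hψ, fun x => abs_le.mpr ⟨?_, ?_⟩⟩ <;>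
    simp only [ContinuousMap.coe_mk] <;> linarith [hle x, hge x]

end LipschitzEnvelope

namespace IsIdemMeasure

variable {X : Type*} [TopologicalSpace X] {μ : C(X, ℝ) → ℝ}

lemma monotone (hμ : IsIdemMeasure μ) : Monotone μ := fun φ ψ h => by
  rw [← sup_eq_right.mpr h, hμ.2.2]
  exact le_max_left _ _

lemma map_zero (hμ : IsIdemMeasure μ) : μ 0 = 0 := by
  simpa using hμ.1 0

/-- On an empty space `const 0 = const 1`, which normalization forbids. -/
lemma nonempty (hμ : IsIdemMeasure μ) : Nonempty X := by
  by_contra hX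
  rw [not_nonempty_iff] at hX
  have h := hμ.1 1
  rw [Subsingleton.elim (ContinuousMap.const X 1) (ContinuousMap.const X 0), hμ.1 0] at h
  exact zero_ne_one h

lemma le_add_of_le_add (hμ : IsIdemMeasure μ) {φ ψ : C(X, ℝ)} {c : ℝ}
    (h : ∀ x, φ x ≤ c + ψ x) : μ φ ≤ c + μ ψ :=
  hμ.2.1 c ψ ▸ hμ.monotone h

lemma abs_sub_le (hμ : IsIdemMeasure μ) {φ ψ : C(X, ℝ)} {c : ℝ}
    (h : ∀ x, |φ x - ψ x| ≤ c) : |μ φ - μ ψ| ≤ c := by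
  have h₁ := hμ.le_add_of_le_add (φ := φ) (ψ := ψ) (c := c) fun x => by
    linarith [(abs_le.mp (h x)).2]
  have h₂ := hμ.le_add_of_le_add (φ := ψ) (ψ := φ) (c := c) fun x => by
    linarith [(abs_le.mp (h x)).1]
  rw [abs_sub_le_iff]
  constructor <;> linarith

end IsIdemMeasure

section Distances

variable {X : Type*} [MetricSpace X] {n : ℕ} {μ ν τ : C(X, ℝ) → ℝ}

lemma mem_nLip_iff {φ : C(X, ℝ)} : φ ∈ nLip X n ↔ LipschitzWith n φ := by
  simp [nLip, lipschitzWith_iff_dist_le_mul, Real.dist_eq]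

lemma abs_sub_le_of_mem_nLip [CompactSpace X] (hμ : IsIdemMeasure μ) (hν : IsIdemMeasure ν)
    {φ : C(X, ℝ)} (hφ : φ ∈ nLip X n) : |μ φ - ν φ| ≤ 2 * n * diam (univ : Set X) := by
  obtain ⟨x₀⟩ := hμ.nonempty
  have hφc : ∀ x, |φ x - ContinuousMap.const X (φ x₀) x| ≤ n * diam (univ : Set X) := fun x =>
    (hφ x x₀).trans <| mul_le_mul_of_nonneg_left
      (dist_le_diam_of_mem isBounded_of_compactSpace trivial trivial) n.cast_nonneg
  have hμc := hμ.abs_sub_le hφc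
  have hνc := hν.abs_sub_le hφc
  rw [hμ.1] at hμc
  rw [hν.1] at hνc
  calc |μ φ - ν φ| ≤ |μ φ - φ x₀| + |φ x₀ - ν φ| := abs_sub_le _ _ _
    _ ≤ 2 * n * diam (univ : Set X) := by rw [abs_sub_comm (φ x₀)]; linarith

lemma dHat_nonneg (n : ℕ) (μ ν : C(X, ℝ) → ℝ) : 0 ≤ dHat n μ ν :=
  Real.sSup_nonneg <| by
    rintro _ ⟨φ, -, rfl⟩
    exact abs_nonneg _

lemma dHat_comm (n : ℕ) (μ ν : C(X, ℝ) → ℝ) : dHat n μ ν = dHat n ν μ := by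
  simp only [dHat, abs_sub_comm (μ _)]

lemma dHat_self (n : ℕ) (μ : C(X, ℝ) → ℝ) : dHat n μ μ = 0 :=
  le_antisymm (Real.sSup_le (by rintro _ ⟨φ, -, rfl⟩; simp) le_rfl) (dHat_nonneg n μ μ)

lemma dHat_le [CompactSpace X] (hμ : IsIdemMeasure μ) (hν : IsIdemMeasure ν) :
    dHat n μ ν ≤ 2 * n * diam (univ : Set X) :=
  Real.sSup_le (by rintro _ ⟨φ, hφ, rfl⟩; exact abs_sub_le_of_mem_nLip hμ hν hφ)
    (by have := diam_nonneg (s := (univ : Set X)); positivity)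

lemma abs_sub_le_dHat [CompactSpace X] (hμ : IsIdemMeasure μ) (hν : IsIdemMeasure ν)
    {φ : C(X, ℝ)} (hφ : φ ∈ nLip X n) : |μ φ - ν φ| ≤ dHat n μ ν :=
  le_csSup ⟨_, by rintro _ ⟨ψ, hψ, rfl⟩; exact abs_sub_le_of_mem_nLip hμ hν hψ⟩ ⟨φ, hφ, rfl⟩

lemma dHat_triangle [CompactSpace X] (hμ : IsIdemMeasure μ) (hν : IsIdemMeasure ν)
    (hτ : IsIdemMeasure τ) : dHat n μ τ ≤ dHat n μ ν + dHat n ν τ :=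
  Real.sSup_le
    (by
      rintro _ ⟨φ, hφ, rfl⟩
      exact (abs_sub_le _ _ _).trans
        (add_le_add (abs_sub_le_dHat hμ hν hφ) (abs_sub_le_dHat hν hτ hφ)))
    (add_nonneg (dHat_nonneg n μ ν) (dHat_nonneg n ν τ))

lemma dTilde_nonneg (n : ℕ) (μ ν : C(X, ℝ) → ℝ) : 0 ≤ dTilde n μ ν :=
  mul_nonneg (by positivity) (dHat_nonneg n μ ν)

lemma dTilde_comm (n : ℕ) (μ ν : C(X, ℝ) → ℝ) : dTilde n μ ν = dTilde n ν μ := by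
  rw [dTilde, dHat_comm, dTilde]

lemma dTilde_self (n : ℕ) (μ : C(X, ℝ) → ℝ) : dTilde n μ μ = 0 := by
  rw [dTilde, dHat_self, mul_zero]

lemma dTilde_le [CompactSpace X] (hμ : IsIdemMeasure μ) (hν : IsIdemMeasure ν) :
    dTilde n μ ν ≤ 2 * diam (univ : Set X) := by
  have hD := diam_nonneg (s := (univ : Set X))
  rcases n.eq_zero_or_pos with rfl | hn
  · simp [dTilde, hD]
  · calc dTilde n μ ν ≤ 1 / n * (2 * n * diam (univ : Set X)) :=
          mul_le_mul_of_nonneg_left (dHat_le hμ hν) (by positivity)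
      _ = 2 * diam (univ : Set X) := by field_simp

lemma dTilde_triangle [CompactSpace X] (hμ : IsIdemMeasure μ) (hν : IsIdemMeasure ν)
    (hτ : IsIdemMeasure τ) : dTilde n μ τ ≤ dTilde n μ ν + dTilde n ν τ := by
  simp only [dTilde, ← mul_add]
  exact mul_le_mul_of_nonneg_left (dHat_triangle hμ hν hτ) (by positivity)

lemma eqOn_nLip_of_dTilde_eq_zero [CompactSpace X] (hμ : IsIdemMeasure μ)
    (hν : IsIdemMeasure ν) (h : dTilde (n + 1) μ ν = 0) :
    ∀ φ ∈ nLip X (n + 1), μ φ = ν φ := by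
  have hHat : dHat (n + 1) μ ν = 0 := by
    simpa [dTilde, Nat.cast_add_one_ne_zero] using h
  intro φ hφ
  have := abs_sub_le_dHat hμ hν hφ
  rw [hHat] at this
  exact sub_eq_zero.mp (abs_nonpos_iff.mp this)

end Distances

lemma summable_one_div_two_pow_succ_mul {a : ℕ → ℝ} {C : ℝ} (h₀ : ∀ k, 0 ≤ a k)
    (hC : ∀ k, a k ≤ C) : Summable fun k => (1 / 2 ^ (k + 1) : ℝ) * a k :=
  Summable.of_nonneg_of_le (fun k => mul_nonneg (by positivity) (h₀ k))
    (fun k => mul_le_mul_of_nonneg_left (hC k) (by positivity))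
    ((summable_geometric_two' C).congr fun k => by ring)

theorem IsIdemMeasure.ext_of_eqOn_nLip {X : Type*} [MetricSpace X] [CompactSpace X]
    {μ ν : C(X, ℝ) → ℝ} (hμ : IsIdemMeasure μ) (hν : IsIdemMeasure ν)
    (h : ∀ n : ℕ, ∀ φ ∈ nLip X (n + 1), μ φ = ν φ) : μ = ν := by
  funext φ
  refine eq_of_forall_dist_le fun ε hε => ?_
  obtain ⟨n, ψ, hψ, hφψ⟩ := φ.exists_lipschitzWith_abs_sub_le (half_pos hε)
  have hψn : ψ ∈ nLip X (n + 1) := mem_nLip_iff.mpr (hψ.weaken (by simp))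
  calc dist (μ φ) (ν φ) = |(μ φ - μ ψ) - (ν φ - ν ψ)| := by
        rw [Real.dist_eq, h n ψ hψn]; ring_nf
    _ ≤ |μ φ - μ ψ| + |ν φ - ν ψ| := abs_sub _ _
    _ ≤ ε / 2 + ε / 2 := add_le_add (hμ.abs_sub_le hφψ) (hν.abs_sub_le hφψ)
    _ = ε := add_halves ε

section IdemMetric

variable {X : Type*} [MetricSpace X] {μ ν τ : C(X, ℝ) → ℝ}

lemma summable_dMet [CompactSpace X] (hμ : IsIdemMeasure μ) (hν : IsIdemMeasure ν) :
    Summable fun k : ℕ => (1 / 2 ^ (k + 1) : ℝ) * dTilde (k + 1) μ ν :=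
  summable_one_div_two_pow_succ_mul (fun _ => dTilde_nonneg _ μ ν) fun _ => dTilde_le hμ hν

lemma dMet_comm (μ ν : C(X, ℝ) → ℝ) : dMet μ ν = dMet ν μ := by
  simp only [dMet, dTilde_comm _ μ]

lemma dMet_self (μ : C(X, ℝ) → ℝ) : dMet μ μ = 0 := by
  simp [dMet, dTilde_self]

lemma dMet_triangle [CompactSpace X] (hμ : IsIdemMeasure μ) (hν : IsIdemMeasure ν)
    (hτ : IsIdemMeasure τ) : dMet μ τ ≤ dMet μ ν + dMet ν τ := by
  rw [dMet, dMet, dMet, ← (summable_dMet hμ hν).tsum_add (summable_dMet hν hτ)]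
  refine (summable_dMet hμ hτ).tsum_le_tsum (fun k => ?_)
    ((summable_dMet hμ hν).add (summable_dMet hν hτ))
  rw [← mul_add]
  exact mul_le_mul_of_nonneg_left (dTilde_triangle hμ hν hτ) (by positivity)

lemma eq_of_dMet_eq_zero [CompactSpace X] (hμ : IsIdemMeasure μ) (hν : IsIdemMeasure ν)
    (h : dMet μ ν = 0) : μ = ν := by
  have hsum : HasSum (fun k : ℕ => (1 / 2 ^ (k + 1) : ℝ) * dTilde (k + 1) μ ν) 0 :=
    h ▸ (summable_dMet hμ hν).hasSum
  have hterms := (hasSum_zero_iff_of_nonneg fun k =>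
    mul_nonneg (by positivity) (dTilde_nonneg (k + 1) μ ν)).mp hsum
  refine hμ.ext_of_eqOn_nLip hν fun n => eqOn_nLip_of_dTilde_eq_zero hμ hν ?_
  simpa using congrFun hterms n

end IdemMetric

/-- For a compact metric space `(X, d)`, the series defining
`d̃(μ, ν) = Σ_{n=1}^∞ 2^{−n}·d̃ₙ(μ, ν)` converges, and `d̃` is a metric on `I(X)`: it is
symmetric, satisfies the triangle inequality, and vanishes exactly on the diagonal. -/
theorem statement6 {X : Type*} [MetricSpace X] [CompactSpace X]
    (μ ν τ : C(X, ℝ) → ℝ) (hμ : IsIdemMeasure μ) (hν : IsIdemMeasure ν)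
    (hτ : IsIdemMeasure τ) :
    Summable (fun k : ℕ => (1 / 2 ^ (k + 1) : ℝ) * dTilde (k + 1) μ ν) ∧
    dMet μ ν = dMet ν μ ∧
    dMet μ τ ≤ dMet μ ν + dMet ν τ ∧
    (dMet μ ν = 0 ↔ μ = ν) :=
  ⟨summable_dMet hμ hν, dMet_comm μ ν, dMet_triangle hμ hν hτ,
    eq_of_dMet_eq_zero hμ hν, fun h => h ▸ dMet_self μ⟩
end
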